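/- Let n ≥ 1 and let F(x) = x^{2^n − 2} be the inverse power function over GF(2^n). Let c ∈ GF(2^n) with c ≠ 0 and c ≠ 1, and suppose Tr(c) = Tr(c^{-1}) = 0, where Tr is the absolute trace from GF(2^n) to GF(2). Then the c-differential spectrum of F is given by ω_0 = 2^{n−1}, ω_1 = 2, ω_2 = 2^{n−1} − 4, ω_3 = 2, and ω_i = 0 for i ≥ 4; in particular F is differentially (c,3)-uniform. -/

import Mathlib

open Finset

/-- `cdelta F d c b` is the number of `x` in the finite field `F` with
`(x+1)^d - c * x^d = b`, i.e. the entry `δ_c(b)` of the `c`-DDT of `x ↦ x^d`. -/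
noncomputable def cdelta (F : Type*) [Field F] (d : ℕ) (c b : F) : ℕ :=
  Nat.card {x : F // (x + 1) ^ d - c * x ^ d = b}

/-- `comega F d c i` is the number of `b` in `F` with `δ_c(b) = i`,
i.e. the value `ω_i` of the `c`-differential spectrum of `x ↦ x^d`. -/
noncomputable def comega (F : Type*) [Field F] (d : ℕ) (c : F) (i : ℕ) : ℕ :=
  Nat.card {b : F // cdelta F d c b = i}

open scoped Classical in
/-- The quadratic character of `F`, valued in `ℤ`. -/
noncomputable def chi (F : Type*) [Field F] (x : F) : ℤ :=
  if x = 0 then 0 else if IsSquare x then 1 else -1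

/-!
For `x ∉ {0, 1}` we have `x ^ (q - 2) = x⁻¹`, so `Δ_c(x) = b` becomes the quadratic equation
`b x² + (b + c + 1) x + c = 0`, which has neither `0` nor `1` as a root; the two remaining
points give `Δ_c(0) = 1` and `Δ_c(1) = c`. In characteristic 2 a quadratic `A x² + B x + C` with
`A, B ≠ 0` has 0 or 2 roots, and it has a root as soon as `Tr(A C / B²) = 0`. Hence
`δ_c(0) = δ_c(c + 1) = 1` (the equation degenerates to a linear one, resp. to a square),
`δ_c(1) = δ_c(c) = 3` because `Tr(c⁻¹) = Tr(c²) = 0`, and every other `δ_c(b)` is 0 or 2.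
The identities `∑ ωᵢ = q = ∑ i ωᵢ` then determine `ω₀` and `ω₂`.
-/

section Spectrum
variable {F : Type*} [Field F] (d : ℕ) (c : F)

theorem comega_eq_zero_of_lt {m i : ℕ} (hm : ∀ b, cdelta F d c b ≤ m) (hi : m < i) :
    comega F d c i = 0 :=
  have : IsEmpty {b : F // cdelta F d c b = i} := ⟨fun ⟨b, hb⟩ => by have := hm b; omega⟩
  Nat.card_of_isEmpty

variable [Fintype F]

theorem cdelta_eq_card_filter [DecidableEq F] (b : F) :
    cdelta F d c b = #{x | (x + 1) ^ d - c * x ^ d = b} :=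
  Nat.card_eq_fintype_card.trans (Fintype.card_subtype _)

theorem comega_eq_card_filter (i : ℕ) : comega F d c i = #{b | cdelta F d c b = i} :=
  Nat.card_eq_fintype_card.trans (Fintype.card_subtype _)

theorem sum_cdelta : ∑ b, cdelta F d c b = Fintype.card F := by
  classical
  simp only [cdelta_eq_card_filter]
  exact (card_eq_sum_card_fiberwise fun x _ => mem_univ _).symm

theorem sum_comega {m : ℕ} (hm : ∀ b, cdelta F d c b ≤ m) :
    ∑ i ∈ range (m + 1), comega F d c i = Fintype.card F := by
  simp only [comega_eq_card_filter]
  exact (card_eq_sum_card_fiberwise fun b _ => mem_range_succ_iff.2 (hm b)).symm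

theorem sum_mul_comega {m : ℕ} (hm : ∀ b, cdelta F d c b ≤ m) :
    ∑ i ∈ range (m + 1), i * comega F d c i = Fintype.card F := by
  rw [← sum_cdelta d c, ← sum_fiberwise_of_maps_to fun b _ => mem_range_succ_iff.2 (hm b)]
  refine sum_congr rfl fun i _ => ?_
  rw [comega_eq_card_filter, sum_congr rfl fun b hb => (mem_filter.1 hb).2, sum_const,
    smul_eq_mul, mul_comm]

theorem comega_eq_two_of_iff {i : ℕ} {u v : F} (huv : u ≠ v)
    (h : ∀ b, cdelta F d c b = i ↔ b = u ∨ b = v) : comega F d c i = 2 := by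
  classical
  rw [comega_eq_card_filter, ← card_pair huv]
  congr 1
  ext b
  simp [h]

end Spectrum

theorem pow_card_sub_two_eq_inv {F : Type*} [Field F] [Fintype F] (hq : 2 < Fintype.card F)
    (x : F) : x ^ (Fintype.card F - 2) = x⁻¹ := by
  rcases eq_or_ne x 0 with rfl | hx
  · rw [zero_pow (by omega), inv_zero]
  · refine eq_inv_of_mul_eq_one_left ?_
    rw [← pow_succ, show Fintype.card F - 2 + 1 = Fintype.card F - 1 by omega,
      FiniteField.pow_card_sub_one_eq_one x hx]

theorem card_filter_linear_eq_one {F : Type*} [Field F] [Fintype F] [DecidableEq F] {B C : F}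
    (hB : B ≠ 0) : #{x | B * x + C = 0} = 1 := by
  rw [card_eq_one]
  refine ⟨-C / B, ?_⟩
  ext x
  simp only [mem_filter, mem_univ, true_and, mem_singleton]
  rw [eq_div_iff hB, add_eq_zero_iff_eq_neg, mul_comm]

section CharTwo

variable {F : Type*} [Field F] [CharP F 2]

theorem inv_add_one_sub_mul_inv_eq_iff {b c x : F} (hc : c ≠ 0) :
    (x + 1)⁻¹ - c * x⁻¹ = b ↔
      (x = 0 ∧ b = 1) ∨ (x = 1 ∧ b = c) ∨ b * x ^ 2 + (b + c + 1) * x + c = 0 := by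
  have h2 : (2 : F) = 0 := CharTwo.two_eq_zero
  rcases eq_or_ne x 0 with rfl | hx0
  · simp [hc, eq_comm]
  rcases eq_or_ne x 1 with rfl | hx1
  · have hQ : b + (b + c + 1) + c = 1 := by linear_combination (b + c) * h2
    simp [hQ, one_add_one_eq_two, h2, eq_comm, CharTwo.neg_eq]
  have hx1' : x + 1 ≠ 0 := fun h => hx1 (by linear_combination h - h2)
  simp only [hx0, hx1, false_and, false_or]
  field_simp
  constructor <;> intro h
  · linear_combination h + (x * b + x * c + x ^ 2 * b + c) * h2
  · linear_combination h - (x * b + x * c + x ^ 2 * b + c) * h2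

theorem quadratic_eq_zero_iff_of_root {A B C r x : F} (hA : A ≠ 0)
    (hr : A * r ^ 2 + B * r + C = 0) :
    A * x ^ 2 + B * x + C = 0 ↔ x = r ∨ x = r + B / A := by
  have h2 : (2 : F) = 0 := CharTwo.two_eq_zero
  have hfactor : A * x ^ 2 + B * x + C = A * ((x + r) * (x + (r + B / A))) := by
    field_simp
    linear_combination hr - (A * x * r + A * r ^ 2 + B * r) * h2
  rw [hfactor, mul_eq_zero, mul_eq_zero, CharTwo.add_eq_zero, CharTwo.add_eq_zero]
  simp [hA]

variable [Fintype F] [DecidableEq F]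

theorem card_filter_quadratic_eq_two {A B C r : F} (hA : A ≠ 0) (hB : B ≠ 0)
    (hr : A * r ^ 2 + B * r + C = 0) :
    #{x | A * x ^ 2 + B * x + C = 0} = 2 := by
  have hne : r ≠ r + B / A := by simpa using div_ne_zero hB hA
  convert card_pair hne using 2
  ext x
  simp [quadratic_eq_zero_iff_of_root hA hr]

theorem card_filter_quadratic_eq_zero_or_two {A B C : F} (hA : A ≠ 0) (hB : B ≠ 0) :
    #{x | A * x ^ 2 + B * x + C = 0} = 0 ∨ #{x | A * x ^ 2 + B * x + C = 0} = 2 := by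
  by_cases h : ∃ r, A * r ^ 2 + B * r + C = 0
  · obtain ⟨r, hr⟩ := h
    exact .inr (card_filter_quadratic_eq_two hA hB hr)
  · push Not at h
    exact .inl (card_eq_zero.2 (filter_eq_empty_iff.2 fun x _ => h x))

theorem card_filter_mul_sq_add_eq_one {A C : F} (hA : A ≠ 0) :
    #{x | A * x ^ 2 + C = 0} = 1 := by
  obtain ⟨s, hs⟩ := (frobeniusEquiv F 2).surjective (C / A)
  rw [frobeniusEquiv_apply, frobenius_def] at hs
  rw [card_eq_one]
  refine ⟨s, ?_⟩
  ext x
  rw [mem_filter, mem_singleton, CharTwo.add_eq_zero, mul_comm, ← eq_div_iff hA, ← hs]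
  simp only [mem_univ, true_and, ← frobenius_def, (frobenius_inj F 2).eq_iff]

end CharTwo

section Trace
variable {F : Type*} [Field F] [Finite F] [Algebra (ZMod 2) F]

theorem trace_sq_eq_trace (x : F) :
    Algebra.trace (ZMod 2) F (x ^ 2) = Algebra.trace (ZMod 2) F x := by
  simpa [FiniteField.coe_frobeniusAlgEquivOfAlgebraic] using
    Algebra.trace_eq_of_algEquiv (FiniteField.frobeniusAlgEquivOfAlgebraic (ZMod 2) F) x

/- Artin–Schreier: `y ↦ y ^ 2 + y` is additive with kernel `{0, 1}`, so its range has index 2;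
it lies in the kernel of the (surjective) trace, which has index 2 as well. -/
theorem exists_sq_add_self_eq_of_trace_eq_zero {a : F} (ha : Algebra.trace (ZMod 2) F a = 0) :
    ∃ y : F, y ^ 2 + y = a := by
  have := charP_of_injective_algebraMap' (ZMod 2) (A := F) 2
  let φ : F →+ F :=
    { toFun := fun y => y ^ 2 + y
      map_zero' := by simp
      map_add' := fun x y => by rw [CharTwo.add_sq]; ring }
  let tr : F →+ ZMod 2 := (Algebra.trace (ZMod 2) F).toAddMonoidHom
  have hker : Nat.card φ.ker = 2 := by
    have : (φ.ker : Set F) = {0, 1} := by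
      ext y
      change y ^ 2 + y = 0 ↔ y = 0 ∨ y = 1
      rw [show y ^ 2 + y = y * (y + 1) by ring, mul_eq_zero, CharTwo.add_eq_zero]
    rw [← SetLike.coe_sort_coe, Nat.card_coe_set_eq, this, Set.ncard_pair zero_ne_one]
  have hle : φ.range ≤ tr.ker := by
    rintro _ ⟨y, rfl⟩
    simp [φ, tr, trace_sq_eq_trace, CharTwo.add_self_eq_zero]
  have hcard : Nat.card tr.ker ≤ Nat.card φ.range := by
    have htr := tr.ker.card_mul_index
    have hφ := φ.ker.card_mul_index
    rw [AddSubgroup.index_ker, AddMonoidHom.range_eq_top.2 (Algebra.trace_surjective _ _),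
      AddSubgroup.card_top, Nat.card_zmod] at htr
    rw [AddSubgroup.index_ker, hker] at hφ
    omega
  obtain ⟨y, hy⟩ := (AddSubgroup.eq_of_le_of_card_ge hle hcard).ge ha
  exact ⟨y, hy⟩

theorem exists_quadratic_root_of_trace_eq_zero {A B C : F} (hA : A ≠ 0) (hB : B ≠ 0)
    (htr : Algebra.trace (ZMod 2) F (A * C / B ^ 2) = 0) :
    ∃ x : F, A * x ^ 2 + B * x + C = 0 := by
  have := charP_of_injective_algebraMap' (ZMod 2) (A := F) 2
  obtain ⟨y, hy⟩ := exists_sq_add_self_eq_of_trace_eq_zero htr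
  refine ⟨B / A * y, ?_⟩
  have h2 : (2 : F) = 0 := CharTwo.two_eq_zero
  calc A * (B / A * y) ^ 2 + B * (B / A * y) + C = B ^ 2 / A * (y ^ 2 + y) + C := by
        field_simp
    _ = 0 := by
      rw [hy]
      field_simp
      linear_combination C * h2

end Trace

section InverseFunction
variable {F : Type*} [Field F] [Fintype F]

theorem cdelta_inv_eq [CharP F 2] [DecidableEq F] {c : F} (hc0 : c ≠ 0) (hc1 : c ≠ 1)
    (b : F) :
    cdelta F (Fintype.card F - 2) c b =
      (if b = 1 then 1 else 0) + (if b = c then 1 else 0) +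
        #{x | b * x ^ 2 + (b + c + 1) * x + c = 0} := by
  have hq : 2 < Fintype.card F :=
    Fintype.two_lt_card_iff.2 ⟨0, 1, c, zero_ne_one, hc0.symm, hc1.symm⟩
  have h2 : (2 : F) = 0 := CharTwo.two_eq_zero
  have hQ0 : b * 0 ^ 2 + (b + c + 1) * 0 + c ≠ 0 := by simpa using hc0
  have hQ1 : b * 1 ^ 2 + (b + c + 1) * 1 + c ≠ 0 := fun h =>
    one_ne_zero (by linear_combination h - (b + c) * h2)
  have hpoint (a : F) (p : Prop) [Decidable p] : #{x | x = a ∧ p} = if p then 1 else 0 := by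
    by_cases p <;> simp [*, filter_eq']
  simp only [cdelta_eq_card_filter, pow_card_sub_two_eq_inv hq,
    inv_add_one_sub_mul_inv_eq_iff hc0, filter_or]
  rw [card_union_of_disjoint, card_union_of_disjoint, ← add_assoc, hpoint, hpoint]
  · exact disjoint_filter.2 fun x _ h => by rw [h.1]; exact hQ1
  · refine disjoint_union_right.2 ⟨disjoint_filter.2 fun x _ h h' => ?_,
      disjoint_filter.2 fun x _ h => by rw [h.1]; exact hQ0⟩
    exact zero_ne_one (h.1.symm.trans h'.1)

section
variable [CharP F 2] {c : F}

theorem cdelta_inv_zero (hc0 : c ≠ 0) (hc1 : c ≠ 1) :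
    cdelta F (Fintype.card F - 2) c 0 = 1 := by
  classical
  have hc1' : c + 1 ≠ 0 := fun h => hc1 (by linear_combination h - CharTwo.two_eq_zero (R := F))
  simpa [cdelta_inv_eq hc0 hc1, hc0.symm] using card_filter_linear_eq_one (C := c) hc1'

theorem cdelta_inv_add_one (hc0 : c ≠ 0) (hc1 : c ≠ 1) :
    cdelta F (Fintype.card F - 2) c (c + 1) = 1 := by
  classical
  have h2 : (2 : F) = 0 := CharTwo.two_eq_zero
  have hc1' : c + 1 ≠ 0 := fun h => hc1 (by linear_combination h - h2)
  have hB : c + 1 + c + 1 = 0 := by linear_combination (c + 1) * h2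
  simpa [cdelta_inv_eq hc0 hc1, hc0, hB] using card_filter_mul_sq_add_eq_one (C := c) hc1'

theorem cdelta_inv_eq_zero_or_two (hc0 : c ≠ 0) (hc1 : c ≠ 1) {b : F} (hb0 : b ≠ 0)
    (hb1 : b ≠ 1) (hbc : b ≠ c) (hbc1 : b ≠ c + 1) :
    cdelta F (Fintype.card F - 2) c b = 0 ∨ cdelta F (Fintype.card F - 2) c b = 2 := by
  classical
  have hB : b + c + 1 ≠ 0 := fun h =>
    hbc1 (by linear_combination h - (c + 1) * CharTwo.two_eq_zero (R := F))
  simpa [cdelta_inv_eq hc0 hc1, hb1, hbc] using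
    card_filter_quadratic_eq_zero_or_two (C := c) hb0 hB

end

section
variable [Algebra (ZMod 2) F] {c : F}

theorem cdelta_inv_one (hc0 : c ≠ 0) (hc1 : c ≠ 1)
    (htrci : Algebra.trace (ZMod 2) F c⁻¹ = 0) :
    cdelta F (Fintype.card F - 2) c 1 = 3 := by
  classical
  have := charP_of_injective_algebraMap' (ZMod 2) (A := F) 2
  have hB : (1 : F) + c + 1 = c := by linear_combination CharTwo.two_eq_zero (R := F)
  have hB0 : (1 : F) + c + 1 ≠ 0 := by rwa [hB]
  obtain ⟨r, hr⟩ := exists_quadratic_root_of_trace_eq_zero (C := c) one_ne_zero hB0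
    (by rwa [hB, one_mul, sq, div_mul_cancel_left₀ hc0])
  rw [cdelta_inv_eq hc0 hc1, card_filter_quadratic_eq_two one_ne_zero hB0 hr]
  simp [hc1.symm]

theorem cdelta_inv_self (hc0 : c ≠ 0) (hc1 : c ≠ 1) (htrc : Algebra.trace (ZMod 2) F c = 0) :
    cdelta F (Fintype.card F - 2) c c = 3 := by
  classical
  have := charP_of_injective_algebraMap' (ZMod 2) (A := F) 2
  have hB : c + c + 1 = 1 := by linear_combination c * CharTwo.two_eq_zero (R := F)
  have hB0 : c + c + 1 ≠ 0 := by rw [hB]; exact one_ne_zero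
  obtain ⟨r, hr⟩ := exists_quadratic_root_of_trace_eq_zero (C := c) hc0 hB0
    (by rwa [hB, one_pow, div_one, ← sq, trace_sq_eq_trace])
  rw [cdelta_inv_eq hc0 hc1, card_filter_quadratic_eq_two hc0 hB0 hr]
  simp [hc1]

theorem cdelta_inv_cases (hc0 : c ≠ 0) (hc1 : c ≠ 1) (htrc : Algebra.trace (ZMod 2) F c = 0)
    (htrci : Algebra.trace (ZMod 2) F c⁻¹ = 0) (b : F) :
    (b = 0 ∨ b = c + 1) ∧ cdelta F (Fintype.card F - 2) c b = 1 ∨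
      (b = 1 ∨ b = c) ∧ cdelta F (Fintype.card F - 2) c b = 3 ∨
      cdelta F (Fintype.card F - 2) c b = 0 ∨ cdelta F (Fintype.card F - 2) c b = 2 := by
  have := charP_of_injective_algebraMap' (ZMod 2) (A := F) 2
  rcases eq_or_ne b 0 with rfl | hb0
  · exact .inl ⟨.inl rfl, cdelta_inv_zero hc0 hc1⟩
  rcases eq_or_ne b (c + 1) with rfl | hbc1
  · exact .inl ⟨.inr rfl, cdelta_inv_add_one hc0 hc1⟩
  rcases eq_or_ne b 1 with rfl | hb1
  · exact .inr (.inl ⟨.inl rfl, cdelta_inv_one hc0 hc1 htrci⟩)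
  rcases eq_or_ne b c with rfl | hbc
  · exact .inr (.inl ⟨.inr rfl, cdelta_inv_self hc0 hc1 htrc⟩)
  exact .inr (.inr (cdelta_inv_eq_zero_or_two hc0 hc1 hb0 hb1 hbc hbc1))

theorem cdelta_inv_le_three (hc0 : c ≠ 0) (hc1 : c ≠ 1)
    (htrc : Algebra.trace (ZMod 2) F c = 0) (htrci : Algebra.trace (ZMod 2) F c⁻¹ = 0) (b : F) :
    cdelta F (Fintype.card F - 2) c b ≤ 3 := by
  rcases cdelta_inv_cases hc0 hc1 htrc htrci b with ⟨-, h⟩ | ⟨-, h⟩ | h | h <;> omega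

theorem cdelta_inv_eq_one_iff (hc0 : c ≠ 0) (hc1 : c ≠ 1)
    (htrc : Algebra.trace (ZMod 2) F c = 0) (htrci : Algebra.trace (ZMod 2) F c⁻¹ = 0) {b : F} :
    cdelta F (Fintype.card F - 2) c b = 1 ↔ b = 0 ∨ b = c + 1 := by
  have := charP_of_injective_algebraMap' (ZMod 2) (A := F) 2
  refine ⟨fun h => ?_, ?_⟩
  · rcases cdelta_inv_cases hc0 hc1 htrc htrci b with ⟨hb, -⟩ | ⟨-, h'⟩ | h' | h'
    exacts [hb, by omega, by omega, by omega]
  · rintro (rfl | rfl)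
    exacts [cdelta_inv_zero hc0 hc1, cdelta_inv_add_one hc0 hc1]

theorem cdelta_inv_eq_three_iff (hc0 : c ≠ 0) (hc1 : c ≠ 1)
    (htrc : Algebra.trace (ZMod 2) F c = 0) (htrci : Algebra.trace (ZMod 2) F c⁻¹ = 0) {b : F} :
    cdelta F (Fintype.card F - 2) c b = 3 ↔ b = 1 ∨ b = c := by
  refine ⟨fun h => ?_, ?_⟩
  · rcases cdelta_inv_cases hc0 hc1 htrc htrci b with ⟨-, h'⟩ | ⟨hb, -⟩ | h' | h'
    exacts [by omega, hb, by omega, by omega]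
  · rintro (rfl | rfl)
    exacts [cdelta_inv_one hc0 hc1 htrci, cdelta_inv_self hc0 hc1 htrc]

end

end InverseFunction

theorem comega_inv_of_trace_eq_zero {F : Type*} [Field F] [Fintype F] [Algebra (ZMod 2) F]
    {c : F} (hc0 : c ≠ 0) (hc1 : c ≠ 1) (htrc : Algebra.trace (ZMod 2) F c = 0)
    (htrci : Algebra.trace (ZMod 2) F c⁻¹ = 0) :
    comega F (Fintype.card F - 2) c 0 = Fintype.card F / 2 ∧
    comega F (Fintype.card F - 2) c 1 = 2 ∧
    comega F (Fintype.card F - 2) c 2 = Fintype.card F / 2 - 4 ∧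
    comega F (Fintype.card F - 2) c 3 = 2 ∧
    (∀ i, 4 ≤ i → comega F (Fintype.card F - 2) c i = 0) ∧
    (∀ b, cdelta F (Fintype.card F - 2) c b ≤ 3) ∧
    (∃ b, cdelta F (Fintype.card F - 2) c b = 3) := by
  have := charP_of_injective_algebraMap' (ZMod 2) (A := F) 2
  have hc10 : (0 : F) ≠ c + 1 := fun h =>
    hc1 (by linear_combination -h - CharTwo.two_eq_zero (R := F))
  have hle := cdelta_inv_le_three hc0 hc1 htrc htrci
  have h1 := comega_eq_two_of_iff _ _ hc10 fun b => cdelta_inv_eq_one_iff hc0 hc1 htrc htrci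
  have h3 := comega_eq_two_of_iff _ _ (Ne.symm hc1) fun b =>
    cdelta_inv_eq_three_iff hc0 hc1 htrc htrci
  have hsum := sum_comega _ _ hle
  have hmul := sum_mul_comega _ _ hle
  simp only [sum_range_succ, sum_range_zero] at hsum hmul
  refine ⟨by omega, h1, by omega, h3, fun i hi => comega_eq_zero_of_lt _ _ hle hi, hle,
    1, cdelta_inv_one hc0 hc1 htrci⟩

theorem stmt_4 (n : ℕ) (hn : 1 ≤ n)
    (c : GaloisField 2 n) (hc0 : c ≠ 0) (hc1 : c ≠ 1)
    (htrc : Algebra.trace (ZMod 2) (GaloisField 2 n) c = 0)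
    (htrci : Algebra.trace (ZMod 2) (GaloisField 2 n) c⁻¹ = 0) :
    comega (GaloisField 2 n) (2 ^ n - 2) c 0 = 2 ^ (n - 1) ∧
    comega (GaloisField 2 n) (2 ^ n - 2) c 1 = 2 ∧
    comega (GaloisField 2 n) (2 ^ n - 2) c 2 = 2 ^ (n - 1) - 4 ∧
    comega (GaloisField 2 n) (2 ^ n - 2) c 3 = 2 ∧
    (∀ i, 4 ≤ i → comega (GaloisField 2 n) (2 ^ n - 2) c i = 0) ∧
    (∀ b, cdelta (GaloisField 2 n) (2 ^ n - 2) c b ≤ 3) ∧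
    (∃ b, cdelta (GaloisField 2 n) (2 ^ n - 2) c b = 3) := by
  let _ : Fintype (GaloisField 2 n) := Fintype.ofFinite _
  have hq : Fintype.card (GaloisField 2 n) = 2 ^ n := by
    rw [Fintype.card_eq_nat_card, GaloisField.card 2 n (by omega)]
  have hhalf : 2 ^ n / 2 = 2 ^ (n - 1) := Nat.pow_div hn two_pos
  simpa only [hq, hhalf] using comega_inv_of_trace_eq_zero hc0 hc1 htrc htrci
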